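/- For the GDP privacy curve δ(ε) = Φ(−ε/μ + μ/2) − e^ε Φ(−ε/μ − μ/2) with μ > 0, δ(ε) is nonnegative for all ε ≥ 0. -/
import Mathlib


open ProbabilityTheory MeasureTheory

lemma stdNormalCDF_eq_integral (x : ℝ) :
    (gaussianReal 0 1 (Set.Iic x)).toReal = ∫ t in Set.Iic x, gaussianPDFReal 0 1 t := by
  rw [gaussianReal_apply_eq_integral 0 one_ne_zero, ENNReal.toReal_ofReal]
  exact setIntegral_nonneg measurableSet_Iic fun t _ => gaussianPDFReal_nonneg 0 1 t

lemma shifted_cdf (μ x : ℝ) :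
    (gaussianReal 0 1 (Set.Iic (x - μ))).toReal = ∫ t in Set.Iic x, gaussianPDFReal μ 1 t := by
  have h1 : gaussianReal μ 1 (Set.Iic x) = gaussianReal 0 1 (Set.Iic (x - μ)) := by
    rw [← zero_add μ, ← gaussianReal_map_add_const μ,
      Measure.map_apply (measurable_add_const μ) measurableSet_Iic]
    congr 1
    ext t
    simp [sub_le_iff_le_add, le_sub_iff_add_le]
  rw [← h1, gaussianReal_apply_eq_integral μ one_ne_zero, ENNReal.toReal_ofReal]
  exact setIntegral_nonneg measurableSet_Iic fun t _ => gaussianPDFReal_nonneg μ 1 t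

/-- The standard normal cumulative distribution function. -/
noncomputable def stdNormalCDF (x : ℝ) : ℝ :=
  (gaussianReal 0 1 (Set.Iic x)).toReal

/-- The GDP privacy curve `δ(ε) = Φ(−ε/μ + μ/2) − e^ε Φ(−ε/μ − μ/2)` is
nonnegative for all `ε ≥ 0` when `μ > 0`. -/
theorem gdp_delta_nonneg (μ : ℝ) (hμ : 0 < μ) (ε : ℝ) (hε : 0 ≤ ε) :
    0 ≤ stdNormalCDF (-ε / μ + μ / 2) - Real.exp ε * stdNormalCDF (-ε / μ - μ / 2) := by
  have hab : -ε / μ - μ / 2 = (-ε / μ + μ / 2) - μ := by ring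
  rw [sub_nonneg, stdNormalCDF, stdNormalCDF, hab, shifted_cdf, stdNormalCDF_eq_integral,
    ← integral_const_mul]
  apply setIntegral_mono_on
  · exact ((integrable_gaussianPDFReal μ 1).const_mul _).integrableOn
  · exact (integrable_gaussianPDFReal 0 1).integrableOn
  · exact measurableSet_Iic
  · intro x hx
    simp only [Set.mem_Iic] at hx
    rw [gaussianPDFReal, gaussianPDFReal]
    rw [mul_left_comm, ← Real.exp_add]
    gcongr
    have hx' : μ * x ≤ -ε + μ ^ 2 / 2 := by
      have h1 := mul_le_mul_of_nonneg_left hx hμ.le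
      have h2 : μ * (-ε / μ + μ / 2) = -ε + μ ^ 2 / 2 := by
        field_simp
      linarith
    push_cast
    nlinarith
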